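/- arXiv:2005.12817 — 2 statements merged into one kernel-verified Lean document; each statement's English description precedes it below -/
import Mathlib

section
/- Let G be a stable weighted multigraph of genus g and let d be a multidegree of total degree g − 2 on G. Then d is semistable if and only if for every vertex v ∈ V there exists an orientation O of G such that d = d_O − v and there is no nonempty proper subset S ⊊ V with v ∈ S whose cut is directed away from S. -/
open Finset

/-- A multigraph on vertex type `V` with edge type `E`: each edge `e` joins the
(possibly equal) vertices `fst e` and `snd e` (loops and multiple edges allowed). -/
structure Multigraph (V E : Type) where
  fst : E → V
  snd : E → V

/-- An orientation of a multigraph: each edge gets a tail and a head, which are its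
two endpoints (in one of the two possible orders). -/
structure GraphOrientation {V E : Type} (G : Multigraph V E) where
  tail : E → V
  head : E → V
  compat : ∀ e, (tail e = G.fst e ∧ head e = G.snd e) ∨ (tail e = G.snd e ∧ head e = G.fst e)

variable {V E : Type} [Fintype V] [Fintype E] [DecidableEq V] [DecidableEq E]

namespace Multigraph

/-- `E(S)`: the set of edges with both endpoints in `S`. -/
def edgesIn (G : Multigraph V E) (S : Finset V) : Finset E :=
  univ.filter fun e => G.fst e ∈ S ∧ G.snd e ∈ S

/-- Membership in the cut of `S`: exactly one endpoint of `e` lies in `S`. -/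
def InCut (G : Multigraph V E) (S : Finset V) (e : E) : Prop :=
  (G.fst e ∈ S ∧ G.snd e ∉ S) ∨ (G.fst e ∉ S ∧ G.snd e ∈ S)

instance (G : Multigraph V E) (S : Finset V) : DecidablePred (G.InCut S) := fun e =>
  decidable_of_iff ((G.fst e ∈ S ∧ G.snd e ∉ S) ∨ (G.fst e ∉ S ∧ G.snd e ∈ S)) Iff.rfl

/-- `ε(S)`: the number of edges with exactly one endpoint in `S`. -/
def cutCard (G : Multigraph V E) (S : Finset V) : ℕ :=
  (univ.filter fun e => G.InCut S e).card

/-- The genus `g(S) = |E(S)| - |S| + 1 + Σ_{v ∈ S} g_v` of a subset of vertices,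
for the vertex weight function `w`. -/
def genusOf (G : Multigraph V E) (w : V → ℕ) (S : Finset V) : ℤ :=
  ((G.edgesIn S).card : ℤ) - S.card + 1 + ∑ v ∈ S, (w v : ℤ)

/-- The genus of the weighted multigraph. -/
def genus (G : Multigraph V E) (w : V → ℕ) : ℤ := G.genusOf w univ

/-- The valence of a vertex: the number of edge-ends at it (a loop counts twice). -/
def valence (G : Multigraph V E) (v : V) : ℕ :=
  (univ.filter fun e => G.fst e = v).card + (univ.filter fun e => G.snd e = v).card

/-- Adjacency via some edge. -/
def Adj (G : Multigraph V E) (a b : V) : Prop :=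
  ∃ e, (G.fst e = a ∧ G.snd e = b) ∨ (G.fst e = b ∧ G.snd e = a)

/-- The multigraph is connected: nonempty, and any two vertices are joined by a path. -/
def Connected (G : Multigraph V E) : Prop :=
  Nonempty V ∧ ∀ a b : V, Relation.ReflTransGen G.Adj a b

/-- Adjacency inside the induced subgraph on `S` (via an edge of `E(S)`). -/
def AdjOn (G : Multigraph V E) (S : Finset V) (a b : V) : Prop :=
  ∃ e, ((G.fst e = a ∧ G.snd e = b) ∨ (G.fst e = b ∧ G.snd e = a)) ∧
    G.fst e ∈ S ∧ G.snd e ∈ S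

/-- The induced subgraph on `S` is connected. -/
def ConnectedOn (G : Multigraph V E) (S : Finset V) : Prop :=
  ∀ a ∈ S, ∀ b ∈ S, Relation.ReflTransGen (G.AdjOn S) a b

/-- The weighted multigraph is stable: connected, of genus at least 2, and every
vertex of weight 0 has valence at least 3. -/
def IsStable (G : Multigraph V E) (w : V → ℕ) : Prop :=
  G.Connected ∧ 2 ≤ G.genus w ∧ ∀ v, w v = 0 → 3 ≤ G.valence v

/-- A multidegree `d : V → ℤ` of total degree `δ = ∑ v, d v` is semistable if for every
nonempty `S ⊆ V`:
`(2g-2)(g(S)-1) + (δ-g+1)(2g(S)-2+ε(S)) ≤ (2g-2) Σ_{v ∈ S} d v`. -/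
def Semistable (G : Multigraph V E) (w : V → ℕ) (d : V → ℤ) : Prop :=
  ∀ S : Finset V, S.Nonempty →
    (2 * G.genus w - 2) * (G.genusOf w S - 1) +
      ((∑ v, d v) - G.genus w + 1) * (2 * G.genusOf w S - 2 + (G.cutCard S : ℤ)) ≤
    (2 * G.genus w - 2) * ∑ v ∈ S, d v

/-- A multidegree is stable if it is semistable and the semistability inequality is
strict for every nonempty proper subset of vertices. -/
def StableDeg (G : Multigraph V E) (w : V → ℕ) (d : V → ℤ) : Prop :=
  G.Semistable w d ∧ ∀ S : Finset V, S.Nonempty → S ≠ univ →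
    (2 * G.genus w - 2) * (G.genusOf w S - 1) +
      ((∑ v, d v) - G.genus w + 1) * (2 * G.genusOf w S - 2 + (G.cutCard S : ℤ)) <
    (2 * G.genus w - 2) * ∑ v ∈ S, d v

/-- A multidegree is effective if it is nonnegative at every vertex. -/
def Effective (d : V → ℤ) : Prop := ∀ v, 0 ≤ d v

end Multigraph

namespace GraphOrientation

variable {G : Multigraph V E}

/-- The indegree of a vertex: the number of edges with head `v`. -/
def indeg (O : GraphOrientation G) (v : V) : ℕ :=
  (univ.filter fun e => O.head e = v).card

/-- The multidegree `d_O` associated to an orientation: `d_O(v) = g_v - 1 + indeg_O(v)`. -/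
def multidegree (O : GraphOrientation G) (w : V → ℕ) : V → ℤ :=
  fun v => (w v : ℤ) - 1 + (O.indeg v : ℤ)

/-- The edge `e₀` lies on a directed cycle of `O`: there are `k ≥ 1` distinct vertices
`vs` and distinct edges `es`, with `es i` directed from `vs i` to `vs (i+1)`,
one of the edges being `e₀`. -/
def EdgeInCycle (O : GraphOrientation G) (e₀ : E) : Prop :=
  ∃ (k : ℕ) (vs : Fin (k + 1) → V) (es : Fin (k + 1) → E),
    Function.Injective vs ∧ Function.Injective es ∧ (∃ i, es i = e₀) ∧
    ∀ i, O.tail (es i) = vs i ∧ O.head (es i) = vs (i + 1)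

/-- The orientation contains a directed cycle. -/
def HasDirectedCycle (O : GraphOrientation G) : Prop :=
  ∃ (k : ℕ) (vs : Fin (k + 1) → V) (es : Fin (k + 1) → E),
    Function.Injective vs ∧ Function.Injective es ∧
    ∀ i, O.tail (es i) = vs i ∧ O.head (es i) = vs (i + 1)

/-- The orientation is acyclic: it contains no directed cycle. -/
def Acyclic (O : GraphOrientation G) : Prop := ¬ O.HasDirectedCycle

/-- The orientation is totally cyclic: every edge lies on a directed cycle. -/
def TotallyCyclic (O : GraphOrientation G) : Prop := ∀ e, O.EdgeInCycle e

/-- The cut of `S` is directed towards `S`: every edge of the cut has its head in `S`. -/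
def CutTowards (O : GraphOrientation G) (S : Finset V) : Prop :=
  ∀ e, G.InCut S e → O.head e ∈ S

/-- The cut of `S` is directed away from `S`: every edge of the cut has its tail in `S`. -/
def CutAway (O : GraphOrientation G) (S : Finset V) : Prop :=
  ∀ e, G.InCut S e → O.tail e ∈ S

end GraphOrientation

/-!
Put `κ(u) = 2 g_u - 2 + val(u)`. Then `2 g(S) - 2 + ε(S) = Σ_{u ∈ S} κ(u)`, every `κ(u)` is positive
by stability, and `κ(S) + κ(Sᶜ) = 2g - 2`; so at total degree `g - 2` semistability says exactly
that `d(S) ≥ g(S) - 1` for every nonempty proper `S`. For an orientation `O`,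
`Σ_{u ∈ S} d_O(u) = g(S) - 1 + #{cut edges with head in S}`, so for `d = d_O - v` and `v ∈ S` that
inequality holds iff the cut of `S` is not directed away from `S`. Conversely, the indegrees
`m = d + v - g_u + 1` forced by `d = d_O - v` satisfy Hall's condition `|E(S)| ≤ m(S)`, with
equality at `S = V`, so some orientation realises them.
-/

section

variable {V E : Type} [Fintype E] [DecidableEq V]

namespace Multigraph

variable (G : Multigraph V E)

lemma edgesIn_univ [Fintype V] : G.edgesIn univ = univ := by
  ext; simp [edgesIn]

lemma cutCard_univ [Fintype V] : G.cutCard univ = 0 := by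
  simp [cutCard, InCut]

lemma sum_valence (S : Finset V) :
    ∑ u ∈ S, G.valence u = 2 * #(G.edgesIn S) + G.cutCard S := by
  simp only [valence, sum_add_distrib, sum_card_fiberwise_eq_card_filter]
  simp only [edgesIn, cutCard, card_filter, mul_sum, ← sum_add_distrib]
  refine sum_congr rfl fun e _ => ?_
  by_cases h₁ : G.fst e ∈ S <;> by_cases h₂ : G.snd e ∈ S <;> simp [InCut, h₁, h₂]

lemma two_mul_genusOf_sub_two_add_cutCard (w : V → ℕ) (S : Finset V) :
    2 * G.genusOf w S - 2 + G.cutCard S = ∑ u ∈ S, (2 * (w u : ℤ) - 2 + G.valence u) := by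
  have h := congrArg (Nat.cast (R := ℤ)) (G.sum_valence S)
  push_cast at h
  simp only [genusOf, sum_add_distrib, sum_sub_distrib, ← mul_sum, h, sum_const, nsmul_eq_mul]
  ring

lemma two_mul_genusOf_sub_two_add_cutCard_add_compl [Fintype V] (w : V → ℕ) (S : Finset V) :
    (2 * G.genusOf w S - 2 + G.cutCard S) + (2 * G.genusOf w Sᶜ - 2 + G.cutCard Sᶜ) =
      2 * G.genus w - 2 := by
  rw [two_mul_genusOf_sub_two_add_cutCard, two_mul_genusOf_sub_two_add_cutCard,
    sum_add_sum_compl, ← two_mul_genusOf_sub_two_add_cutCard, cutCard_univ, genus,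
    Nat.cast_zero, add_zero]

lemma Connected.valence_pos {G : Multigraph V E} (hG : G.Connected) {u b : V} (hub : u ≠ b) :
    0 < G.valence u := by
  obtain rfl | ⟨c, ⟨e, he⟩, -⟩ := (hG.2 u b).cases_head
  · exact absurd rfl hub
  rw [valence]
  rcases he with ⟨he, -⟩ | ⟨-, he⟩
  · have : (univ.filter fun e => G.fst e = u).Nonempty := ⟨e, by simp [he]⟩
    exact Nat.add_pos_left this.card_pos _
  · have : (univ.filter fun e => G.snd e = u).Nonempty := ⟨e, by simp [he]⟩
    exact Nat.add_pos_right _ this.card_pos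

variable {G} {w : V → ℕ}

lemma IsStable.one_le_two_mul_weight_sub_two_add_valence [Fintype V] (hG : G.IsStable w)
    {u b : V} (hub : u ≠ b) : 1 ≤ 2 * (w u : ℤ) - 2 + G.valence u := by
  have hval := hG.1.valence_pos hub
  by_cases hw : w u = 0
  · have := hG.2.2 u hw
    simp only [hw]
    omega
  · omega

lemma IsStable.two_mul_genusOf_sub_two_add_cutCard_pos [Fintype V] (hG : G.IsStable w)
    {S : Finset V} (hS : S.Nonempty) (hSu : S ≠ univ) :
    0 < 2 * G.genusOf w S - 2 + G.cutCard S := by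
  obtain ⟨b, hb⟩ : ∃ b, b ∉ S := by simpa [eq_univ_iff_forall] using hSu
  rw [two_mul_genusOf_sub_two_add_cutCard]
  refine sum_pos (fun u hu => ?_) hS
  have := hG.one_le_two_mul_weight_sub_two_add_valence (u := u) (b := b) (by grind)
  omega

theorem semistable_iff_genusOf_sub_one_le [Fintype V] (hG : G.IsStable w) {d : V → ℤ}
    (hd : ∑ v, d v = G.genus w - 2) :
    G.Semistable w d ↔
      ∀ S : Finset V, S.Nonempty → S ≠ univ → G.genusOf w S - 1 ≤ ∑ u ∈ S, d u := by
  unfold Semistable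
  rw [hd]
  refine forall_congr' fun S => forall_congr' fun hS => ?_
  by_cases hSu : S = univ
  · subst hSu
    simp only [cutCard_univ, hd, ne_eq, not_true_eq_false, IsEmpty.forall_iff, iff_true]
    change (2 * G.genus w - 2) * (G.genus w - 1) + _ * (2 * G.genus w - 2 + _) ≤ _
    push_cast
    exact le_of_eq (by ring)
  · have hpos := hG.two_mul_genusOf_sub_two_add_cutCard_pos hS hSu
    have hpos' := hG.two_mul_genusOf_sub_two_add_cutCard_pos
      ((compl_ne_univ_iff_nonempty Sᶜ).1 (by rwa [compl_compl]))
      ((compl_ne_univ_iff_nonempty S).2 hS)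
    have hsum := G.two_mul_genusOf_sub_two_add_cutCard_add_compl w S
    -- the inequality at `S` reads `(2g - 2) (g(S) - 1 - d(S)) ≤ κ(S)`, and `0 < κ(S) < 2g - 2`
    simp only [hSu, ne_eq, not_false_eq_true, forall_const]
    constructor
    · intro h
      by_contra! hlt
      nlinarith
    · intro h
      nlinarith

end Multigraph

namespace GraphOrientation

variable {G : Multigraph V E} (O : GraphOrientation G)

def cutIn (S : Finset V) : Finset E :=
  univ.filter fun e => G.InCut S e ∧ O.head e ∈ S

lemma cutAway_iff_cutIn_eq_empty {S : Finset V} : O.CutAway S ↔ O.cutIn S = ∅ := by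
  simp only [CutAway, cutIn, filter_eq_empty_iff, mem_univ, true_implies, not_and]
  refine forall_congr' fun e => imp_congr_right fun he => ?_
  unfold Multigraph.InCut at he
  rcases O.compat e with ⟨ht, hh⟩ | ⟨ht, hh⟩ <;> rw [ht, hh] <;> tauto

lemma sum_indeg (S : Finset V) :
    ∑ u ∈ S, O.indeg u = #(G.edgesIn S) + #(O.cutIn S) := by
  simp only [indeg]
  rw [sum_card_fiberwise_eq_card_filter]
  simp only [Multigraph.edgesIn, cutIn, card_filter, ← sum_add_distrib]
  refine sum_congr rfl fun e _ => ?_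
  rcases O.compat e with ⟨-, hh⟩ | ⟨-, hh⟩ <;>
    by_cases h₁ : G.fst e ∈ S <;> by_cases h₂ : G.snd e ∈ S <;> simp [Multigraph.InCut, hh, h₁, h₂]

lemma sum_multidegree (w : V → ℕ) (S : Finset V) :
    ∑ u ∈ S, O.multidegree w u = G.genusOf w S - 1 + #(O.cutIn S) := by
  have h := congrArg (Nat.cast (R := ℤ)) (O.sum_indeg S)
  push_cast at h
  simp only [multidegree, sum_add_distrib, sum_sub_distrib, h, Multigraph.genusOf, sum_const,
    nsmul_eq_mul, mul_one]
  ring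

def ofHead (h : E → V) (hh : ∀ e, h e = G.fst e ∨ h e = G.snd e) : GraphOrientation G where
  tail e := if h e = G.fst e then G.snd e else G.fst e
  head := h
  compat e := by
    by_cases h₁ : h e = G.fst e
    · simp [h₁]
    · simp [(hh e).resolve_left h₁]

end GraphOrientation

namespace Multigraph

variable (G : Multigraph V E)

lemma exists_injective_slot_at_endpoint (m : V → ℕ)
    (hall : ∀ S : Finset V, #(G.edgesIn S) ≤ ∑ u ∈ S, m u) :
    ∃ f : E → Σ u, Fin (m u), Function.Injective f ∧
      ∀ e, (f e).1 = G.fst e ∨ (f e).1 = G.snd e := by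
  -- `u` gets `m u` slots; matching each edge to a slot at one of its endpoints makes that endpoint
  -- its head, and Hall's condition for this matching is `hall`.
  let slots (S : Finset V) : Finset (Σ u, Fin (m u)) := S.sigma fun _ => univ
  have hall' : ∀ F : Finset E, #F ≤ #(F.biUnion fun e => slots {G.fst e, G.snd e}) := by
    intro F
    let S := F.image G.fst ∪ F.image G.snd
    have hF : F ⊆ G.edgesIn S := fun e he => by
      simp only [edgesIn, mem_filter, mem_univ, true_and, S, mem_union, mem_image]
      exact ⟨.inl ⟨e, he, rfl⟩, .inr ⟨e, he, rfl⟩⟩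
    have hS : (F.biUnion fun e => slots {G.fst e, G.snd e}) = slots S := by
      ext ⟨u, i⟩
      simp only [slots, S, mem_biUnion, mem_sigma, mem_insert, mem_singleton, mem_univ, and_true,
        mem_union, mem_image]
      grind
    calc #F ≤ #(G.edgesIn S) := card_le_card hF
      _ ≤ ∑ u ∈ S, m u := hall S
      _ = _ := by simp [hS, slots]
  obtain ⟨f, hf, hft⟩ := (all_card_le_biUnion_card_iff_exists_injective _).1 hall'
  exact ⟨f, hf, fun e => by simpa [slots] using hft e⟩

theorem exists_orientation_indeg_eq [Fintype V] (m : V → ℤ)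
    (hall : ∀ S : Finset V, (#(G.edgesIn S) : ℤ) ≤ ∑ u ∈ S, m u)
    (htot : ∑ u, m u = Fintype.card E) :
    ∃ O : GraphOrientation G, ∀ u, (O.indeg u : ℤ) = m u := by
  have hm : ∀ u, 0 ≤ m u := fun u => by simpa using (hall {u}).trans' (Int.natCast_nonneg _)
  lift m to V → ℕ using hm
  dsimp only at hall htot
  obtain ⟨f, hf, hfe⟩ := G.exists_injective_slot_at_endpoint m fun S => by exact_mod_cast hall S
  let O := GraphOrientation.ofHead (fun e => (f e).1) hfe
  have hle : ∀ u, O.indeg u ≤ m u := fun u =>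
    calc O.indeg u ≤ #(({u} : Finset V).sigma fun u => (univ : Finset (Fin (m u)))) :=
          card_le_card_of_injOn f (fun e he => by simpa [O, GraphOrientation.ofHead,
            GraphOrientation.indeg] using he) hf.injOn
      _ = m u := by simp
  have hsum : ∑ u, O.indeg u = ∑ u, m u := by
    simp only [GraphOrientation.indeg]
    rw [sum_card_fiberwise_eq_card_filter, filter_true_of_mem fun _ _ => mem_univ _, card_univ]
    exact_mod_cast htot.symm
  exact ⟨O, fun u => congrArg _ ((sum_eq_sum_iff_of_le fun u _ => hle u).1 hsum u (mem_univ u))⟩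

theorem exists_orientation_multidegree_sub_eq [Fintype V] {w : V → ℕ} {d : V → ℤ}
    (hd : ∑ v, d v = G.genus w - 2)
    (h : ∀ S : Finset V, S.Nonempty → S ≠ univ → G.genusOf w S - 1 ≤ ∑ u ∈ S, d u) (v : V) :
    ∃ O : GraphOrientation G, d = fun u => O.multidegree w u - if u = v then 1 else 0 := by
  let m : V → ℤ := fun u => d u + (if u = v then 1 else 0) + 1 - w u
  have hm : ∀ S : Finset V, ∑ u ∈ S, m u =
      ∑ u ∈ S, d u + (if v ∈ S then 1 else 0) - (G.genusOf w S - 1) + #(G.edgesIn S) := by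
    intro S
    simp only [m, genusOf, sum_add_distrib, sum_sub_distrib, sum_ite_eq', sum_const,
      nsmul_eq_mul, mul_one]
    ring
  have htot : ∑ u, m u = Fintype.card E := by
    rw [hm, hd, edgesIn_univ, genus, if_pos (mem_univ v), card_univ]
    ring
  have hall : ∀ S : Finset V, (#(G.edgesIn S) : ℤ) ≤ ∑ u ∈ S, m u := by
    intro S
    rcases S.eq_empty_or_nonempty with rfl | hS
    · simp [edgesIn]
    by_cases hSu : S = univ
    · simp [hSu, htot, edgesIn_univ]
    · have := h S hS hSu
      rw [hm]
      split_ifs <;> linarith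
  obtain ⟨O, hO⟩ := G.exists_orientation_indeg_eq m hall htot
  exact ⟨O, funext fun u => by simp [GraphOrientation.multidegree, hO, m]⟩

end Multigraph

end

/-- A multidegree of total degree `g - 2` on a stable weighted multigraph
is semistable iff for every vertex `v` there is an orientation `O` with `d = d_O - v`
and no nonempty proper subset `S ⊊ V` with `v ∈ S` whose cut is directed away from `S`. -/
theorem semistable_degree_g_sub_two_iff_orientations
    (G : Multigraph V E) (w : V → ℕ) (hG : G.IsStable w) (d : V → ℤ)
    (hd : ∑ v, d v = G.genus w - 2) :
    G.Semistable w d ↔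
      ∀ v : V, ∃ O : GraphOrientation G,
        d = (fun u => O.multidegree w u - if u = v then 1 else 0) ∧
        ¬ ∃ S : Finset V, S.Nonempty ∧ S ≠ univ ∧ v ∈ S ∧ O.CutAway S := by
  have hsum (O : GraphOrientation G) (v : V) (S : Finset V) :
      ∑ u ∈ S, (O.multidegree w u - if u = v then 1 else 0) =
        G.genusOf w S - 1 + #(O.cutIn S) - if v ∈ S then 1 else 0 := by
    rw [sum_sub_distrib, O.sum_multidegree, sum_ite_eq']
  rw [G.semistable_iff_genusOf_sub_one_le hG hd]
  constructor
  · intro h v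
    obtain ⟨O, rfl⟩ := G.exists_orientation_multidegree_sub_eq hd h v
    refine ⟨O, rfl, ?_⟩
    rintro ⟨S, hS, hSu, hvS, hcut⟩
    have := h S hS hSu
    rw [hsum, O.cutAway_iff_cutIn_eq_empty.1 hcut, if_pos hvS] at this
    simp at this
  · rintro h S ⟨v, hv⟩ hSu
    obtain ⟨O, rfl, hO⟩ := h v
    have hcut : (O.cutIn S).Nonempty := by
      rw [nonempty_iff_ne_empty, Ne, ← O.cutAway_iff_cutIn_eq_empty]
      exact fun hc => hO ⟨S, ⟨v, hv⟩, hSu, hv, hc⟩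
    rw [hsum, if_pos hv]
    have := hcut.card_pos
    omega
end

section
/- Let G be a stable weighted multigraph of genus g and let d be a multidegree of total degree g − 2 on G. Then d is semistable if and only if d + v is semistable for every vertex v ∈ V. -/
open Finset

variable {V E : Type} [Fintype V] [Fintype E] [DecidableEq V] [DecidableEq E]

section AuxLemmas

variable (G : Multigraph V E) (w : V → ℕ)

lemma aux_sum_filter_card (S : Finset V) (f : E → V) :
    ∑ v ∈ S, (univ.filter fun e => f e = v).card
      = (univ.filter fun e => f e ∈ S).card := by
  simp only [Finset.card_filter]
  rw [Finset.sum_comm]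
  refine Finset.sum_congr rfl fun e _ => ?_
  rw [Finset.sum_ite_eq S (f e) (fun _ => 1)]

lemma aux_sum_valence (S : Finset V) :
    ∑ v ∈ S, G.valence v = 2 * (G.edgesIn S).card + G.cutCard S := by
  simp only [Multigraph.valence, Finset.sum_add_distrib,
    aux_sum_filter_card S G.fst, aux_sum_filter_card S G.snd]
  simp only [Multigraph.edgesIn, Multigraph.cutCard, Finset.card_filter,
    Finset.mul_sum, ← Finset.sum_add_distrib]
  refine Finset.sum_congr rfl fun e _ => ?_
  unfold Multigraph.InCut
  by_cases h1 : G.fst e ∈ S <;> by_cases h2 : G.snd e ∈ S <;> simp [h1, h2]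

lemma aux_one_le_valence (hconn : G.Connected) {v b : V} (hvb : v ≠ b) :
    1 ≤ G.valence v := by
  obtain ⟨-, h⟩ := hconn
  rcases (h v b).cases_head with rfl | ⟨c, ⟨e, he⟩, -⟩
  · exact absurd rfl hvb
  · unfold Multigraph.valence
    rcases he with ⟨h1, -⟩ | ⟨-, h2⟩
    · have : e ∈ univ.filter fun e => G.fst e = v := by simp [h1]
      have := Finset.card_pos.mpr ⟨e, this⟩
      omega
    · have : e ∈ univ.filter fun e => G.snd e = v := by simp [h2]
      have := Finset.card_pos.mpr ⟨e, this⟩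
      omega

lemma aux_cutCard_compl (S : Finset V) : G.cutCard Sᶜ = G.cutCard S := by
  unfold Multigraph.cutCard
  congr 1
  refine Finset.filter_congr fun e _ => ?_
  unfold Multigraph.InCut
  simp only [Finset.mem_compl]
  tauto

lemma aux_cutCard_univ : G.cutCard (univ : Finset V) = 0 := by
  simp [Multigraph.cutCard, Multigraph.InCut]

lemma aux_edges_split (S : Finset V) :
    (G.edgesIn S).card + (G.edgesIn Sᶜ).card + G.cutCard S
      = (univ : Finset E).card := by
  rw [Finset.card_eq_sum_ones (univ : Finset E)]
  simp only [Multigraph.edgesIn, Multigraph.cutCard, Finset.card_filter,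
    ← Finset.sum_add_distrib]
  refine Finset.sum_congr rfl fun e _ => ?_
  unfold Multigraph.InCut
  by_cases h1 : G.fst e ∈ S <;> by_cases h2 : G.snd e ∈ S <;>
    simp [h1, h2, Finset.mem_compl]

lemma aux_edgesIn_univ : G.edgesIn (univ : Finset V) = univ := by
  simp [Multigraph.edgesIn]

lemma aux_genus_split (S : Finset V) :
    G.genusOf w S + G.genusOf w Sᶜ = G.genus w + 1 - G.cutCard S := by
  unfold Multigraph.genus Multigraph.genusOf
  have hE := aux_edges_split G S
  have hV : S.card + Sᶜ.card = (univ : Finset V).card := by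
    rw [Finset.card_add_card_compl, Finset.card_univ]
  have hw : (∑ v ∈ S, (w v : ℤ)) + ∑ v ∈ Sᶜ, (w v : ℤ) = ∑ v, (w v : ℤ) :=
    Finset.sum_add_sum_compl S _
  rw [aux_edgesIn_univ]
  have hE' : ((G.edgesIn S).card : ℤ) + (G.edgesIn Sᶜ).card + G.cutCard S
      = ((univ : Finset E).card : ℤ) := by exact_mod_cast hE
  have hV' : (S.card : ℤ) + Sᶜ.card = ((univ : Finset V).card : ℤ) := by
    exact_mod_cast hV
  linarith

/-- The key inequality: for stable `G` and `S` with nonempty complement,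
`|S| ≤ 2 g(S) - 2 + ε(S)`. -/
lemma aux_L_ge (hG : G.IsStable w) (S : Finset V) (hS : Sᶜ.Nonempty) :
    (S.card : ℤ) ≤ 2 * G.genusOf w S - 2 + G.cutCard S := by
  obtain ⟨hconn, -, hval3⟩ := hG
  obtain ⟨b, hb⟩ := hS
  have hb' : b ∉ S := Finset.mem_compl.mp hb
  have hval := aux_sum_valence G S
  have hval' : (∑ v ∈ S, (G.valence v : ℤ))
      = 2 * (G.edgesIn S).card + G.cutCard S := by
    exact_mod_cast hval
  have hrw : 2 * G.genusOf w S - 2 + G.cutCard S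
      = ∑ v ∈ S, ((G.valence v : ℤ) + 2 * w v - 2) := by
    unfold Multigraph.genusOf
    rw [Finset.sum_sub_distrib, Finset.sum_add_distrib, Finset.sum_const,
      ← Finset.mul_sum]
    simp only [nsmul_eq_mul, mul_one]
    linarith
  rw [hrw]
  have hone : ∀ v ∈ S, (1 : ℤ) ≤ (G.valence v : ℤ) + 2 * w v - 2 := by
    intro v hv
    have hvb : v ≠ b := fun h => hb' (h ▸ hv)
    have h1 : 1 ≤ G.valence v := aux_one_le_valence G hconn hvb
    by_cases hw0 : w v = 0
    · have h3 := hval3 v hw0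
      have : (3 : ℤ) ≤ (G.valence v : ℤ) := by exact_mod_cast h3
      simp [hw0]
      linarith
    · have hw1 : 1 ≤ w v := Nat.one_le_iff_ne_zero.mpr hw0
      have : (1 : ℤ) ≤ (w v : ℤ) := by exact_mod_cast hw1
      have : (1 : ℤ) ≤ (G.valence v : ℤ) := by exact_mod_cast h1
      linarith
  calc (S.card : ℤ) = ∑ _v ∈ S, (1 : ℤ) := by simp
    _ ≤ _ := Finset.sum_le_sum hone

end AuxLemmas

/-- A multidegree of total degree `g - 2` on a stable weighted multigraph
is semistable iff `d + v` is semistable for every vertex `v`. -/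
theorem semistable_degree_g_sub_two_iff_add_vertex
    (G : Multigraph V E) (w : V → ℕ) (hG : G.IsStable w) (d : V → ℤ)
    (hd : ∑ v, d v = G.genus w - 2) :
    G.Semistable w d ↔
      ∀ v : V, G.Semistable w (fun u => d u + if u = v then 1 else 0) := by
  classical
  set g := G.genus w with hgdef
  have hg2 : 2 ≤ g := hG.2.1
  have hguniv : G.genusOf w univ = g := rfl
  have hsum' : ∀ v : V, (∑ u, (d u + if u = v then 1 else 0)) = g - 1 := by
    intro v
    rw [Finset.sum_add_distrib, hd, Finset.sum_ite_eq' univ v (fun _ => (1 : ℤ))]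
    simp
    ring
  have hsplit : ∀ (v : V) (S : Finset V),
      (∑ u ∈ S, (d u + if u = v then 1 else 0))
        = (∑ u ∈ S, d u) + (if v ∈ S then 1 else 0) := by
    intro v S
    rw [Finset.sum_add_distrib, Finset.sum_ite_eq' S v (fun _ => (1 : ℤ))]
  constructor
  · intro h v S hS
    simp only []
    rw [hsum' v, hsplit v S, show g - 1 - g + 1 = (0 : ℤ) from by ring, zero_mul,
      add_zero]
    by_cases hU : S = univ
    · subst hU
      rw [hguniv, hd]
      have hite : (if v ∈ (univ : Finset V) then (1 : ℤ) else 0) = 1 := by simp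
      rw [hite]
      nlinarith
    · have hSc : Sᶜ.Nonempty := Finset.nonempty_iff_ne_empty.mpr
        fun hemp => hU ((Finset.compl_eq_empty_iff S).mp hemp)
      have h1 := h S hS
      rw [hd, show g - 2 - g + 1 = (-1 : ℤ) from by ring] at h1
      have hLc : ((Sᶜ.card : ℤ)) ≤ 2 * G.genusOf w Sᶜ - 2 + G.cutCard Sᶜ := by
        have : (Sᶜᶜ : Finset V).Nonempty := by rwa [compl_compl]
        exact aux_L_ge G w hG Sᶜ this
      have hcc := aux_cutCard_compl G S
      have hid := aux_genus_split G w S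
      have hc1 : (1 : ℤ) ≤ (Sᶜ.card : ℤ) := by
        exact_mod_cast Finset.card_pos.mpr hSc
      -- L(S) ≤ 2g - 3
      have hLS : 2 * G.genusOf w S - 2 + (G.cutCard S : ℤ) ≤ 2 * g - 3 := by
        rw [← hgdef] at hid
        rw [hcc] at hLc
        linarith
      -- hence g(S) - 1 ≤ ∑_S d
      have hm : G.genusOf w S - 1 ≤ ∑ u ∈ S, d u := by
        have h2 : (2 * g - 2) * (G.genusOf w S - 1 - ∑ u ∈ S, d u) ≤ 2 * g - 3 := by
          linarith
        by_contra hcon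
        push_neg at hcon
        have : 1 ≤ G.genusOf w S - 1 - ∑ u ∈ S, d u := by linarith
        nlinarith
      have hposc : (0 : ℤ) ≤ 2 * g - 2 := by linarith
      have hite : (0 : ℤ) ≤ (if v ∈ S then (1 : ℤ) else 0) := by positivity
      nlinarith
  · intro h S hS
    rw [hd, show g - 2 - g + 1 = (-1 : ℤ) from by ring]
    by_cases hU : S = univ
    · subst hU
      rw [hguniv, hd, aux_cutCard_univ]
      apply le_of_eq
      push_cast
      ring
    · have hSc : Sᶜ.Nonempty := Finset.nonempty_iff_ne_empty.mpr
        fun hemp => hU ((Finset.compl_eq_empty_iff S).mp hemp)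
      obtain ⟨v, hv⟩ := hSc
      have hv' : v ∉ S := Finset.mem_compl.mp hv
      have h1 := h v S hS
      simp only [] at h1
      rw [hsum' v, hsplit v S, show g - 1 - g + 1 = (0 : ℤ) from by ring, zero_mul,
        add_zero, if_neg hv', add_zero] at h1
      have hL : ((S.card : ℤ)) ≤ 2 * G.genusOf w S - 2 + G.cutCard S :=
        aux_L_ge G w hG S ⟨v, hv⟩
      have hc1 : (1 : ℤ) ≤ (S.card : ℤ) := by
        exact_mod_cast Finset.card_pos.mpr hS
      linarith
end
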